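/- Let K be the field R or C, let h be a Lie subalgebra of End(Kⁿ), and let θ : h → h be a Lie algebra automorphism of h (a K-linear bijection with θ[A,B] = [θA, θB]). Let h^d_θ = {(A, θ(A)) : A ∈ h} be the twisted diagonal Lie subalgebra of End(Kⁿ ⊕ Kⁿ), acting block-diagonally: (A, θ(A))·(x, y) = (Ax, θ(A)y). Then the first prolongation of h^d_θ is zero: (h^d_θ)^(1) = 0. -/

import Mathlib

/-!
If every partial map `T(a, ·)` of a symmetric bilinear `T` on `V₁ × V₂` is block diagonal,
`(f a, g a)`, then evaluating `T((x, 0), (0, y))` in both orders kills its second component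
`g (x, 0) y`, so `g (x, 0) = 0`. When the two blocks vanish together (for the twisted diagonal,
because `θ` is injective) this gives `T((x, 0), ·) = 0`; by symmetry then `f a x = 0` for all
`a, x`, so every `T(a, ·)` vanishes.
-/

noncomputable section

/-- Membership in the `k`-th prolongation of a set `h` of endomorphisms of a module `W`:
`T` is a symmetric `(k+1)`-multilinear map such that, fixing the first `k` arguments,
the resulting endomorphism belongs to `h`. -/
def InProl {K : Type*} [Field K] {W : Type*} [AddCommGroup W] [Module K W]
    (h : Set (Module.End K W)) (k : ℕ)
    (T : MultilinearMap K (fun _ : Fin (k+1) => W) W) : Prop :=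
  (∀ (σ : Equiv.Perm (Fin (k+1))) (v : Fin (k+1) → W), (T fun i => v (σ i)) = T v) ∧
  (∀ v : Fin k → W, ∃ A ∈ h, ∀ w : W, A w = T (Fin.snoc v w))

attribute [local instance 100] LieRing.ofAssociativeRing

namespace InProl

variable {K W : Type*} [Field K] [AddCommGroup W] [Module K W] {S : Set (Module.End K W)}
  {T : MultilinearMap K (fun _ : Fin 2 => W) W}

theorem apply_swap (hT : InProl S 1 T) (a b : W) : T ![a, b] = T ![b, a] := by
  rw [← hT.1 (Equiv.swap 0 1) ![b, a]]
  congr 1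
  ext i
  fin_cases i <;> rfl

theorem exists_mem_apply_eq (hT : InProl S 1 T) (a : W) : ∃ A ∈ S, ∀ w, A w = T ![a, w] := by
  simpa using hT.2 ![a]

end InProl

theorem MultilinearMap.eq_zero_of_forall_apply_vecCons {R M N : Type*} [CommSemiring R]
    [AddCommMonoid M] [Module R M] [AddCommMonoid N] [Module R N]
    {T : MultilinearMap R (fun _ : Fin 2 => M) N} (hT : ∀ a b, T ![a, b] = 0) : T = 0 := by
  ext v
  have hv : v = ![v 0, v 1] := by
    ext i
    fin_cases i <;> rfl
  rw [hv]
  exact hT (v 0) (v 1)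

theorem InProl.eq_zero_of_prodMap {K V₁ V₂ ι : Type*} [Field K]
    [AddCommGroup V₁] [Module K V₁] [AddCommGroup V₂] [Module K V₂]
    {f : ι → Module.End K V₁} {g : ι → Module.End K V₂} (hfg : ∀ i, f i = 0 ↔ g i = 0)
    {T : MultilinearMap K (fun _ : Fin 2 => V₁ × V₂) (V₁ × V₂)}
    (hT : InProl {E | ∃ i, E = (f i).prodMap (g i)} 1 T) : T = 0 := by
  have h_block (a) : ∃ j, ∀ w, (f j).prodMap (g j) w = T ![a, w] := by
    obtain ⟨_, ⟨j, rfl⟩, hj⟩ := hT.exists_mem_apply_eq a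
    exact ⟨j, hj⟩
  choose i hi using h_block
  have hi_swap (a b) : (f (i a)).prodMap (g (i a)) b = (f (i b)).prodMap (g (i b)) a := by
    rw [hi, hi, hT.apply_swap]
  have hg (x : V₁) : g (i (x, 0)) = 0 := LinearMap.ext fun y => by
    simpa using congrArg Prod.snd (hi_swap (x, 0) (0, y))
  have hf (a) : f (i a) = 0 := LinearMap.ext fun x => by
    simpa [(hfg _).2 (hg x)] using congrArg Prod.fst (hi_swap a (x, 0))
  refine MultilinearMap.eq_zero_of_forall_apply_vecCons fun a b => ?_
  rw [← hi, hf, (hfg _).1 (hf a), LinearMap.prodMap_zero, LinearMap.zero_apply]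

/-- the twisted diagonal subalgebra `h^d_θ ⊆ End(Kⁿ ⊕ Kⁿ)` of a linear Lie
algebra `h ⊆ End(Kⁿ)` (`K = ℝ` or `ℂ`), twisted by a Lie algebra automorphism `θ` of `h`,
has trivial first prolongation. -/
theorem twisted_diagonal_first_prolongation_trivial
    {K : Type*} [RCLike K] {n : ℕ}
    (h : LieSubalgebra K (Module.End K (Fin n → K)))
    (θ : h ≃ₗ⁅K⁆ h) :
    ∀ T : MultilinearMap K (fun _ : Fin 2 => ((Fin n → K) × (Fin n → K)))
        ((Fin n → K) × (Fin n → K)),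
      InProl {E : Module.End K ((Fin n → K) × (Fin n → K)) |
          ∃ A : h, E = LinearMap.prodMap (A : Module.End K (Fin n → K))
            ((θ A : h) : Module.End K (Fin n → K))} 1 T → T = 0 :=
  fun _ => InProl.eq_zero_of_prodMap fun A => by simp
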